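/- Let a ∈ ℝ and β > c > 0 be real numbers, set b = 2c² − a², ρ(x,t) = ax + bt, and R = √(β² − c²) > 0. Define q_b(x,t) = e^{iρ} · [e^{−4iRβt}(c² + 2Rβ − 2β²) + (e^{−4Rat + 2Rx} + e^{4Rat − 2Rx})·βc + e^{4iRβt}(c² − 2Rβ − 2β²)] / [2c·cos(4Rβt) − β·(e^{−2Rx + 4Rat} + e^{2Rx − 4Rat})]. Then the denominator 2c·cos(4Rβt) − 2β·cosh(2Rx − 4Rat) is nonzero for all (x,t) ∈ ℝ², and q_b satisfies the focusing NLS equation i·∂t q_b + ∂x² q_b + 2 (q_b)² conj(q_b) = 0 on ℝ². -/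

import Mathlib

/-!
Write `θ = 4Rβt`, `η = 2R(x - 2at)` and `q_b = e^{iρ} N / D` with the real denominator
`D = 2c cos θ - 2β cosh η` and `N = 2(c² - 2β²) cos θ + 2βc cosh η - 4iRβ sin θ`.
All derivatives of `N` and `D` stay in the span of `cos θ, cosh η, sin θ, sinh η`, and Hirota's
bilinear equations for `(e^{iρ} N, D)` with `μ = -2c²` become polynomial identities in these four
functions, true modulo `cos² + sin² = 1`, `cosh² - sinh² = 1`, `R² = β² - c²` and `b = 2c² - a²`.
The denominator never vanishes since `c cos θ ≤ c < β ≤ β cosh η`.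
-/

open Complex

noncomputable def pX (f : ℝ → ℝ → ℂ) : ℝ → ℝ → ℂ := fun x t => deriv (fun x' => f x' t) x
noncomputable def pT (f : ℝ → ℝ → ℂ) : ℝ → ℝ → ℂ := fun x t => deriv (fun t' => f x t') t

open ComplexConjugate

def SolvesFocusingNLS (q : ℝ → ℝ → ℂ) : Prop :=
  ∀ x t, I * pT q x t + pX (pX q) x t + 2 * q x t ^ 2 * conj (q x t) = 0

/-- Hirota's bilinearisation: `q = g / f` with `f` real solves NLS as soon as
`(i D_t + D_x² - μ) g·f = 0` and `(D_x² - μ) f·f = 2 |g|²`. -/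
theorem solvesFocusingNLS_div_of_hirota {g gx gxx gt f fx fxx ft : ℝ → ℝ → ℂ} (μ : ℂ)
    (hgx : ∀ x t, HasDerivAt (g · t) (gx x t) x) (hgxx : ∀ x t, HasDerivAt (gx · t) (gxx x t) x)
    (hgt : ∀ x t, HasDerivAt (g x ·) (gt x t) t)
    (hfx : ∀ x t, HasDerivAt (f · t) (fx x t) x) (hfxx : ∀ x t, HasDerivAt (fx · t) (fxx x t) x)
    (hft : ∀ x t, HasDerivAt (f x ·) (ft x t) t)
    (hf : ∀ x t, f x t ≠ 0) (hf_real : ∀ x t, conj (f x t) = f x t)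
    (hbil₁ : ∀ x t, I * (gt x t * f x t - g x t * ft x t)
      + (gxx x t * f x t - 2 * gx x t * fx x t + g x t * fxx x t) = μ * g x t * f x t)
    (hbil₂ : ∀ x t, 2 * (f x t * fxx x t - fx x t ^ 2) - 2 * g x t * conj (g x t)
      = μ * f x t ^ 2) :
    SolvesFocusingNLS fun x t => g x t / f x t := by
  intro x t
  have hf₀ := hf x t
  have hqx : pX (fun x t => g x t / f x t)
      = fun x t => (gx x t * f x t - g x t * fx x t) / f x t ^ 2 :=
    funext₂ fun x t => ((hgx x t).div (hfx x t) (hf x t)).deriv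
  have hqxx : pX (pX fun x t => g x t / f x t) x t
      = ((gxx x t * f x t - g x t * fxx x t) * f x t
          - 2 * fx x t * (gx x t * f x t - g x t * fx x t)) / f x t ^ 3 := by
    rw [hqx]
    refine (((((hgxx x t).mul (hfx x t)).sub ((hgx x t).mul (hfxx x t))).div
      ((hfx x t).pow 2) (pow_ne_zero 2 (hf x t))).deriv).trans ?_
    simp only [Pi.mul_apply, Pi.sub_apply, Pi.pow_apply]
    field_simp
    ring
  have hqt : pT (fun x t => g x t / f x t) x t = (gt x t * f x t - g x t * ft x t) / f x t ^ 2 :=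
    ((hgt x t).div (hft x t) (hf x t)).deriv
  rw [hqxx, hqt, map_div₀, hf_real]
  field_simp
  linear_combination f x t * hbil₁ x t - g x t * hbil₂ x t

theorem HasDerivAt.cexp_I_mul_mul {φ : ℝ → ℝ} {φ' : ℝ} {N : ℝ → ℂ} {N' : ℂ} {x : ℝ}
    (hφ : HasDerivAt φ φ' x) (hN : HasDerivAt N N' x) :
    HasDerivAt (fun x => cexp (I * φ x) * N x) (cexp (I * φ x) * (N' + I * φ' * N x)) x :=
  ((hφ.ofReal_comp.const_mul I).cexp.mul hN).congr_deriv (by ring)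

theorem mul_cos_lt_mul_cosh {c β : ℝ} (h : |c| < β) (u v : ℝ) :
    c * Real.cos u < β * Real.cosh v := by
  have hcos : c * Real.cos u ≤ |c| := (le_abs_self _).trans <| by
    rw [abs_mul]
    exact mul_le_of_le_one_right (abs_nonneg c) (Real.abs_cos_le_one u)
  have hβ : 0 < β := (abs_nonneg c).trans_lt h
  nlinarith [Real.one_le_cosh v]

namespace Breather

variable (a β c R : ℝ)

/-- The combination `p cos θ + q cosh η + r sin θ + s sinh η` of the breather's two phases
`θ = 4Rβt` and `η = 2R(x - 2at)`; this family is closed under `∂ₓ` and `∂ₜ`. -/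
noncomputable def trigHypComb (p q r s : ℂ) (x t : ℝ) : ℂ :=
  p * Real.cos (4 * R * β * t) + q * Real.cosh (2 * R * x - 4 * R * a * t)
    + r * Real.sin (4 * R * β * t) + s * Real.sinh (2 * R * x - 4 * R * a * t)

variable {a β c R}

theorem hasDerivAt_trigHypComb_x (p q r s : ℂ) (x t : ℝ) :
    HasDerivAt (trigHypComb a β R p q r s · t)
      (trigHypComb a β R 0 (2 * R * s) 0 (2 * R * q) x t) x := by
  have hη : HasDerivAt (fun x => 2 * R * x - 4 * R * a * t) (2 * R) x := by
    simpa using ((hasDerivAt_id x).const_mul (2 * R)).sub_const (4 * R * a * t)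
  refine ((((hasDerivAt_const x (p * (Real.cos (4 * R * β * t) : ℂ))).add
    (hη.cosh.ofReal_comp.const_mul q)).add
    (hasDerivAt_const x (r * (Real.sin (4 * R * β * t) : ℂ)))).add
    (hη.sinh.ofReal_comp.const_mul s)).congr_deriv ?_
  simp only [trigHypComb]
  push_cast
  ring

theorem hasDerivAt_trigHypComb_t (p q r s : ℂ) (x t : ℝ) :
    HasDerivAt (trigHypComb a β R p q r s x ·)
      (trigHypComb a β R (4 * R * β * r) (-4 * R * a * s) (-4 * R * β * p) (-4 * R * a * q) x t)
      t := by
  have hθ : HasDerivAt (fun t => 4 * R * β * t) (4 * R * β) t := by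
    simpa using (hasDerivAt_id t).const_mul (4 * R * β)
  have hη : HasDerivAt (fun t => 2 * R * x - 4 * R * a * t) (-(4 * R * a)) t := by
    simpa using ((hasDerivAt_id t).const_mul (4 * R * a)).const_sub (2 * R * x)
  refine ((((hθ.cos.ofReal_comp.const_mul p).add (hη.cosh.ofReal_comp.const_mul q)).add
    (hθ.sin.ofReal_comp.const_mul r)).add (hη.sinh.ofReal_comp.const_mul s)).congr_deriv ?_
  simp only [trigHypComb]
  push_cast
  ring

theorem conj_trigHypComb (p q r s : ℂ) (x t : ℝ) :
    conj (trigHypComb a β R p q r s x t)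
      = trigHypComb a β R (conj p) (conj q) (conj r) (conj s) x t := by
  simp only [trigHypComb, map_add, map_mul, conj_ofReal]

variable (a β c R) in
noncomputable abbrev num : ℝ → ℝ → ℂ :=
  trigHypComb a β R (2 * (c ^ 2 - 2 * β ^ 2)) (2 * β * c) (-4 * I * R * β) 0

variable (a β c R) in
noncomputable abbrev den : ℝ → ℝ → ℂ := trigHypComb a β R (2 * c) (-2 * β) 0 0

theorem den_eq_ofReal (x t : ℝ) : den a β c R x t
    = ↑(2 * c * Real.cos (4 * R * β * t) - 2 * β * Real.cosh (2 * R * x - 4 * R * a * t)) := by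
  simp only [trigHypComb]
  push_cast
  ring

theorem num_eq_exp (x t : ℝ) : num a β c R x t =
    cexp (-4 * I * ((R * β * t : ℝ) : ℂ)) * ((c ^ 2 + 2 * R * β - 2 * β ^ 2 : ℝ) : ℂ)
      + ((Real.exp (-4 * R * a * t + 2 * R * x) + Real.exp (4 * R * a * t - 2 * R * x) : ℝ) : ℂ)
        * ((β * c : ℝ) : ℂ)
      + cexp (4 * I * ((R * β * t : ℝ) : ℂ)) * ((c ^ 2 - 2 * R * β - 2 * β ^ 2 : ℝ) : ℂ) := by
  have hpos : cexp (4 * I * ((R * β * t : ℝ) : ℂ))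
      = Real.cos (4 * R * β * t) + Real.sin (4 * R * β * t) * I := by
    rw [show 4 * I * ((R * β * t : ℝ) : ℂ) = ((4 * R * β * t : ℝ) : ℂ) * I by push_cast; ring,
      exp_mul_I, ofReal_cos, ofReal_sin]
  have hneg : cexp (-4 * I * ((R * β * t : ℝ) : ℂ))
      = Real.cos (4 * R * β * t) - Real.sin (4 * R * β * t) * I := by
    rw [show -4 * I * ((R * β * t : ℝ) : ℂ) = -((4 * R * β * t : ℝ) : ℂ) * I by push_cast; ring,
      exp_mul_I, cos_neg, sin_neg, ofReal_cos, ofReal_sin]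
    ring
  have hcosh : Real.exp (-4 * R * a * t + 2 * R * x) + Real.exp (4 * R * a * t - 2 * R * x)
      = 2 * Real.cosh (2 * R * x - 4 * R * a * t) := by
    rw [Real.cosh_eq]
    ring_nf
  rw [hpos, hneg, hcosh]
  simp only [trigHypComb]
  push_cast
  ring

theorem den_eq_exp (x t : ℝ) : den a β c R x t =
    ((2 * c * Real.cos (4 * R * β * t)
      - β * (Real.exp (-2 * R * x + 4 * R * a * t) + Real.exp (2 * R * x - 4 * R * a * t)) : ℝ)
      : ℂ) := by
  have hcosh : Real.exp (-2 * R * x + 4 * R * a * t) + Real.exp (2 * R * x - 4 * R * a * t)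
      = 2 * Real.cosh (2 * R * x - 4 * R * a * t) := by
    rw [Real.cosh_eq]
    ring_nf
  rw [hcosh, den_eq_ofReal]
  ring_nf

theorem solvesFocusingNLS (b : ℝ) (hb : b = 2 * c ^ 2 - a ^ 2) (hR : R ^ 2 = β ^ 2 - c ^ 2)
    (hden : ∀ x t, den a β c R x t ≠ 0) :
    SolvesFocusingNLS fun x t =>
      cexp (I * ↑(a * x + b * t)) * num a β c R x t / den a β c R x t := by
  have hρx : ∀ x t : ℝ, HasDerivAt (fun x => a * x + b * t) a x := fun x t => by
    simpa using ((hasDerivAt_id x).const_mul a).add_const (b * t)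
  have hρt : ∀ x t : ℝ, HasDerivAt (fun t => a * x + b * t) b t := fun x t => by
    simpa using ((hasDerivAt_id t).const_mul b).const_add (a * x)
  have hCS : ∀ t : ℝ,
      (Real.cos (4 * R * β * t) : ℂ) ^ 2 + (Real.sin (4 * R * β * t) : ℂ) ^ 2 = 1 := fun t => by
    exact_mod_cast Real.cos_sq_add_sin_sq _
  have hCh : ∀ x t : ℝ, (Real.cosh (2 * R * x - 4 * R * a * t) : ℂ) ^ 2
      - (Real.sinh (2 * R * x - 4 * R * a * t) : ℂ) ^ 2 = 1 := fun x t => by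
    exact_mod_cast Real.cosh_sq_sub_sinh_sq _
  have hRC : (R : ℂ) ^ 2 = β ^ 2 - c ^ 2 := by exact_mod_cast hR
  refine solvesFocusingNLS_div_of_hirota (-2 * c ^ 2)
    (fun x t => (hρx x t).cexp_I_mul_mul (hasDerivAt_trigHypComb_x _ _ _ _ x t))
    (fun x t => (hρx x t).cexp_I_mul_mul ((hasDerivAt_trigHypComb_x _ _ _ _ x t).add
      ((hasDerivAt_trigHypComb_x _ _ _ _ x t).const_mul (I * a))))
    (fun x t => (hρt x t).cexp_I_mul_mul (hasDerivAt_trigHypComb_t _ _ _ _ x t))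
    (fun x t => hasDerivAt_trigHypComb_x _ _ _ _ x t)
    (fun x t => hasDerivAt_trigHypComb_x _ _ _ _ x t)
    (fun x t => hasDerivAt_trigHypComb_t _ _ _ _ x t) hden
    (fun x t => by
      simp only [conj_trigHypComb, map_mul, map_neg, map_ofNat, conj_ofReal, map_zero])
    (fun x t => ?_) (fun x t => ?_)
  · have hbC : (b : ℂ) = 2 * c ^ 2 - a ^ 2 := by exact_mod_cast hb
    have hθ := hCS t
    have hη := hCh x t
    simp only [trigHypComb]
    rw [hbC]
    generalize (Real.cos (4 * R * β * t) : ℂ) = C at *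
    generalize (Real.sin (4 * R * β * t) : ℂ) = S at *
    generalize (Real.cosh (2 * R * x - 4 * R * a * t) : ℂ) = K at *
    generalize (Real.sinh (2 * R * x - 4 * R * a * t) : ℂ) = H at *
    generalize cexp _ = W
    linear_combination (norm := ring_nf)
      W * (32 * β ^ 2 * c * R ^ 2 * (hθ - hη) + 32 * I * β ^ 2 * R * S * K * hRC)
    simp only [I_sq, I_pow_three]
    ring
  · have hW : cexp (I * ↑(a * x + b * t)) * conj (cexp (I * ↑(a * x + b * t))) = 1 := by
      rw [mul_conj', norm_exp_I_mul_ofReal]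
      norm_num
    have hθ := hCS t
    have hη := hCh x t
    simp only [map_mul, conj_trigHypComb, map_sub, map_neg, map_pow, map_ofNat, conj_ofReal,
      conj_I, map_zero]
    simp only [trigHypComb]
    generalize (Real.cos (4 * R * β * t) : ℂ) = C at *
    generalize (Real.sin (4 * R * β * t) : ℂ) = S at *
    generalize (Real.cosh (2 * R * x - 4 * R * a * t) : ℂ) = K at *
    generalize (Real.sinh (2 * R * x - 4 * R * a * t) : ℂ) = H at *
    generalize cexp _ = W at *
    generalize conj W = Z at *
    linear_combination (norm := ring_nf) 32 * β ^ 2 * R ^ 2 * (hη - hθ)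
      + 32 * β * C * (β * C - c * K) * hRC
      - 2 * (2 * (c ^ 2 - 2 * β ^ 2) * C + 2 * β * c * K - 4 * I * R * β * S)
        * (2 * (c ^ 2 - 2 * β ^ 2) * C + 2 * β * c * K + 4 * I * R * β * S) * hW
    simp only [I_sq]
    ring

end Breather

theorem statement13 (a β c : ℝ) (hc : 0 < c) (hβ : c < β)
    (b : ℝ) (hb : b = 2 * c ^ 2 - a ^ 2)
    (ρ : ℝ → ℝ → ℝ) (hρ : ∀ x t : ℝ, ρ x t = a * x + b * t)
    (R : ℝ) (hR : R = Real.sqrt (β ^ 2 - c ^ 2))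
    (qb : ℝ → ℝ → ℂ)
    (hqb : ∀ x t : ℝ, qb x t =
      Complex.exp (I * (ρ x t : ℂ)) *
        (Complex.exp (-4 * I * ((R * β * t : ℝ) : ℂ)) * ((c ^ 2 + 2 * R * β - 2 * β ^ 2 : ℝ) : ℂ)
          + ((Real.exp (-4 * R * a * t + 2 * R * x) + Real.exp (4 * R * a * t - 2 * R * x) : ℝ) : ℂ)
              * ((β * c : ℝ) : ℂ)
          + Complex.exp (4 * I * ((R * β * t : ℝ) : ℂ)) * ((c ^ 2 - 2 * R * β - 2 * β ^ 2 : ℝ) : ℂ))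
      / ((2 * c * Real.cos (4 * R * β * t)
          - β * (Real.exp (-2 * R * x + 4 * R * a * t) + Real.exp (2 * R * x - 4 * R * a * t)) : ℝ) : ℂ)) :
    (∀ x t : ℝ,
      2 * c * Real.cos (4 * R * β * t) - 2 * β * Real.cosh (2 * R * x - 4 * R * a * t) ≠ 0)
    ∧ (∀ x t : ℝ,
      I * pT qb x t + pX (pX qb) x t + 2 * (qb x t) ^ 2 * (starRingEnd ℂ) (qb x t) = 0) := by
  have hR2 : R ^ 2 = β ^ 2 - c ^ 2 := by
    rw [hR, Real.sq_sqrt]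
    nlinarith
  have hden : ∀ x t : ℝ,
      2 * c * Real.cos (4 * R * β * t) - 2 * β * Real.cosh (2 * R * x - 4 * R * a * t) ≠ 0 :=
    fun x t => by
      have := mul_cos_lt_mul_cosh (by rwa [abs_of_pos hc]) (4 * R * β * t)
        (2 * R * x - 4 * R * a * t)
      linarith
  refine ⟨hden, ?_⟩
  have hq : qb = fun x t => cexp (I * ↑(a * x + b * t)) * Breather.num a β c R x t
      / Breather.den a β c R x t := by
    funext x t
    rw [hqb, hρ, ← Breather.num_eq_exp, ← Breather.den_eq_exp]
  rw [hq]
  exact Breather.solvesFocusingNLS b hb hR2 fun x t => by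
    rw [Breather.den_eq_ofReal]
    exact_mod_cast hden x t
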